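/- arXiv:2211.00200 — 3 statements merged into one kernel-verified Lean document; each statement's English description precedes it below -/
import Mathlib

section
/- Let I, J be ideals in K[x_0,…,x_N] written as finite intersections I = I_1 ∩ I_2 ∩ … ∩ I_s and J = J_1 ∩ J_2 ∩ … ∩ J_t (for instance, primary decompositions). Then I ⋆ J = ⋂_{1≤i≤s, 1≤j≤t} (I_i ⋆ J_j). -/
/-!
Substituting `x_i ↦ y_i z_i` identifies `I ⋆ J` with the preimage of `I(y) + J(z)` under the
map `K[x] → K[y, z]`, `x_i ↦ y_i z_i`: the relations `x_i - y_i z_i` generate exactly the kernel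
of the substitution on `K[x, y, z]`. Preimages commute with intersections, so it remains to see
that `I(y) + J(z)` distributes over intersections in each argument. Viewing `K[y, z]` as
`K[z][y]`, a polynomial `f` lies in `I(y) + J(z)` iff, for every `K`-linear functional `l` on
`K[z]` vanishing on `J`, applying `l` to the coefficients of `f` gives an element of `I`; this
condition is compatible with arbitrary intersections of the ideals `I`.
-/

open MvPolynomial

noncomputable section

variable {K : Type*} [Field K]

/-- The Hadamard product of two ideals `I, J ⊆ K[x_0,…,x_N]`: introduce new variables
`y_0,…,y_N` and `z_0,…,z_N` (encoded via a sum type), map `I` via `x_i ↦ y_i`, `J` via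
`x_i ↦ z_i`, add the relations `x_i − y_i z_i`, and eliminate `y, z`. -/
def hadamardProduct (N : ℕ) (I J : Ideal (MvPolynomial (Fin (N+1)) K)) :
    Ideal (MvPolynomial (Fin (N+1)) K) :=
  Ideal.comap
    (rename (Sum.inl : Fin (N+1) → Fin (N+1) ⊕ (Fin (N+1) ⊕ Fin (N+1))))
    (Ideal.map (rename (fun i : Fin (N+1) =>
        (Sum.inr (Sum.inl i) : Fin (N+1) ⊕ (Fin (N+1) ⊕ Fin (N+1))))) I
      + Ideal.map (rename (fun i : Fin (N+1) =>
        (Sum.inr (Sum.inr i) : Fin (N+1) ⊕ (Fin (N+1) ⊕ Fin (N+1))))) J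
      + Ideal.span { f | ∃ i : Fin (N+1),
          f = X (Sum.inl i) - X (Sum.inr (Sum.inl i)) * X (Sum.inr (Sum.inr i)) })

theorem Ideal.comap_sup_of_surjective {A B F : Type*} [CommRing A] [CommRing B] [FunLike F A B]
    [RingHomClass F A B] (f : F) (hf : Function.Surjective f) (X Y : Ideal B) :
    (X ⊔ Y).comap f = X.comap f ⊔ Y.comap f := by
  refine le_antisymm ?_ (Ideal.le_comap_sup f)
  conv_lhs => rw [← Ideal.map_comap_of_surjective f hf X, ← Ideal.map_comap_of_surjective f hf Y,
    ← Ideal.map_sup, Ideal.comap_map_of_surjective' f hf]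
  exact sup_le le_rfl (le_sup_left.trans' (Ideal.comap_mono bot_le))

theorem Ideal.map_eq_comap_of_comp_eq {A B C : Type*} [CommRing A] [CommRing B] [CommRing C]
    (g : A →+* B) (e : B ≃+* C) {h : A →+* C} (hh : (e : B →+* C).comp g = h) (I : Ideal A) :
    I.map g = (I.map h).comap e := by
  rw [← hh, ← Ideal.map_map]
  exact (Ideal.comap_map_of_bijective _ e.bijective).symm

theorem Ideal.comap_eq_map_sup_ker {A B F G : Type*} [CommRing A] [CommRing B] [FunLike F A B]
    [RingHomClass F A B] [FunLike G B A] [RingHomClass G B A] (f : F) (g : G)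
    (hfg : Function.RightInverse g f) (I : Ideal B) :
    I.comap f = I.map g ⊔ RingHom.ker f := by
  have hI : (I.map g).map f = I := by
    rw [← Ideal.map_coe f, ← Ideal.map_coe g, Ideal.map_map]
    convert Ideal.map_id I
    exact RingHom.ext hfg
  conv_lhs => rw [← hI]
  exact Ideal.comap_map_of_surjective' f hfg.surjective _

namespace MvPolynomial

section CoeffMap

variable {σ R : Type*} [CommRing R] [Algebra K R]

def coeffMap (l : R →ₗ[K] K) (f : MvPolynomial σ R) : MvPolynomial σ K :=
  AddMonoidAlgebra.map l.toAddMonoidHom f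

theorem coeff_coeffMap (l : R →ₗ[K] K) (f : MvPolynomial σ R) (m : σ →₀ ℕ) :
    coeff m (coeffMap l f) = l (coeff m f) := rfl

theorem coeffMap_add (l : R →ₗ[K] K) (f g : MvPolynomial σ R) :
    coeffMap l (f + g) = coeffMap l f + coeffMap l g := by
  ext m; simp [coeff_coeffMap]

theorem coeffMap_C_mul (l : R →ₗ[K] K) (r : R) (f : MvPolynomial σ R) :
    coeffMap l (C r * f) = coeffMap (l ∘ₗ LinearMap.mulLeft K r) f := by
  ext m; simp [coeff_coeffMap, coeff_C_mul]

theorem coeffMap_X_mul (l : R →ₗ[K] K) (i : σ) (f : MvPolynomial σ R) :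
    coeffMap l (X i * f) = X i * coeffMap l f := by
  classical
  ext m; simp [coeff_coeffMap, coeff_X_mul', apply_ite l]

theorem coeffMap_map_algebraMap (l : R →ₗ[K] K) (g : MvPolynomial σ K) :
    coeffMap l (map (algebraMap K R) g) = l 1 • g := by
  ext m
  rw [coeff_coeffMap, coeff_map, Algebra.algebraMap_eq_smul_one, map_smul, coeff_smul,
    smul_eq_mul, smul_eq_mul, mul_comm]

theorem coeffMap_C (l : R →ₗ[K] K) (r : R) : coeffMap l (C r : MvPolynomial σ R) = C (l r) := by
  classical
  ext m; simp [coeff_coeffMap, coeff_C, apply_ite l]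

variable (I : Ideal (MvPolynomial σ K)) (J : Ideal R)

theorem coeffMap_mul_mem {f : MvPolynomial σ R}
    (hf : ∀ l : R →ₗ[K] K, (∀ r ∈ J, l r = 0) → coeffMap l f ∈ I) (c : MvPolynomial σ R) :
    ∀ l : R →ₗ[K] K, (∀ r ∈ J, l r = 0) → coeffMap l (c * f) ∈ I := by
  induction c using MvPolynomial.induction_on generalizing f with
  | C r =>
    intro l hl
    rw [coeffMap_C_mul]
    exact hf _ fun x hx => by simpa using hl _ (J.mul_mem_left r hx)
  | add p q hp hq =>
    intro l hl
    rw [add_mul, coeffMap_add]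
    exact I.add_mem (hp hf l hl) (hq hf l hl)
  | mul_X p i hp =>
    rw [mul_assoc]
    refine hp fun l hl => ?_
    rw [coeffMap_X_mul]
    exact I.mul_mem_left _ (hf l hl)

def sliceIdeal : Ideal (MvPolynomial σ R) where
  carrier := {f | ∀ l : R →ₗ[K] K, (∀ r ∈ J, l r = 0) → coeffMap l f ∈ I}
  zero_mem' _ _ := by simp [coeffMap]
  add_mem' hf hg l hl := by rw [coeffMap_add]; exact I.add_mem (hf l hl) (hg l hl)
  smul_mem' c _ hf := coeffMap_mul_mem I J hf c

@[simp]
theorem mem_sliceIdeal {f : MvPolynomial σ R} :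
    f ∈ sliceIdeal I J ↔ ∀ l : R →ₗ[K] K, (∀ r ∈ J, l r = 0) → coeffMap l f ∈ I :=
  Iff.rfl

theorem map_sup_map_C_le_sliceIdeal :
    I.map (map (algebraMap K R)) ⊔ J.map (C : R →+* MvPolynomial σ R) ≤ sliceIdeal I J := by
  refine sup_le (Ideal.map_le_iff_le_comap.mpr fun g hg l _ => ?_)
    (Ideal.map_le_iff_le_comap.mpr fun r hr l hl => ?_)
  · show coeffMap l (map (algebraMap K R) g) ∈ I
    rw [coeffMap_map_algebraMap]
    exact I.smul_of_tower_mem _ hg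
  · show coeffMap l (C r) ∈ I
    rw [coeffMap_C, hl r hr, map_zero]
    exact I.zero_mem

theorem sliceIdeal_le_map_sup_map_C :
    sliceIdeal I J ≤ I.map (map (algebraMap K R)) ⊔ J.map (C : R →+* MvPolynomial σ R) := by
  classical
  intro f hf
  let q : R →ₗ[K] R ⧸ J := (Ideal.Quotient.mkₐ K J).toLinearMap
  let b := Module.Basis.ofVectorSpace K (R ⧸ J)
  let ℓ (k) : R →ₗ[K] K := b.coord k ∘ₗ q
  let lift (k) : R := Function.surjInv Ideal.Quotient.mk_surjective (b k)
  let F := f.support.biUnion fun m => (b.repr (q (coeff m f))).support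
  -- expanding in a basis of `R ⧸ J`, `f` agrees modulo `J` with `g`, built from the slices of `f`
  let g := ∑ k ∈ F, C (lift k) * map (algebraMap K R) (coeffMap (ℓ k) f)
  have hg : g ∈ I.map (map (algebraMap K R)) :=
    Ideal.sum_mem _ fun k _ => Ideal.mul_mem_left _ _ <| Ideal.mem_map_of_mem _ <|
      hf (ℓ k) fun r hr => by simp [ℓ, q, Ideal.Quotient.eq_zero_iff_mem.mpr hr]
  have hfg : f - g ∈ J.map (C : R →+* MvPolynomial σ R) := by
    refine mem_map_C_iff.mpr fun m => ?_
    have hF : (b.repr (q (coeff m f))).support ⊆ F := by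
      by_cases hm : m ∈ f.support
      · exact Finset.subset_biUnion_of_mem (fun m => (b.repr (q (coeff m f))).support) hm
      · simp [notMem_support_iff.mp hm]
    have hg_coeff : coeff m g = ∑ k ∈ F, ℓ k (coeff m f) • lift k := by
      rw [coeff_sum]
      refine Finset.sum_congr rfl fun k _ => ?_
      rw [coeff_C_mul, coeff_map, coeff_coeffMap, Algebra.smul_def, mul_comm]
    have hqg : q (coeff m g) = q (coeff m f) :=
      calc q (coeff m g) = ∑ k ∈ F, b.repr (q (coeff m f)) k • b k := by
            simp only [hg_coeff, map_sum, map_smul]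
            refine Finset.sum_congr rfl fun k _ => ?_
            congr 1
            exact Function.surjInv_eq Ideal.Quotient.mk_surjective (b k)
        _ = (b.repr (q (coeff m f))).sum fun k a => a • b k :=
            (Finsupp.sum_of_support_subset _ hF (fun k a => a • b k) fun _ _ => zero_smul K _).symm
        _ = q (coeff m f) := b.linearCombination_repr _
    rw [coeff_sub, ← Ideal.Quotient.eq_zero_iff_mem, map_sub, sub_eq_zero]
    exact hqg.symm
  simpa using Ideal.add_mem _ (Ideal.mem_sup_left hg) (Ideal.mem_sup_right hfg)

theorem map_sup_map_C_eq_sliceIdeal :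
    I.map (map (algebraMap K R)) ⊔ J.map (C : R →+* MvPolynomial σ R) = sliceIdeal I J :=
  le_antisymm (map_sup_map_C_le_sliceIdeal I J) (sliceIdeal_le_map_sup_map_C I J)

theorem iInf_map_sup_map_C {ι : Sort*} (I : ι → Ideal (MvPolynomial σ K)) (J : Ideal R) :
    ⨅ i, (I i).map (map (algebraMap K R)) ⊔ J.map (C : R →+* MvPolynomial σ R)
      = (⨅ i, I i).map (map (algebraMap K R)) ⊔ J.map C := by
  ext f
  simp only [map_sup_map_C_eq_sliceIdeal, Submodule.mem_iInf, mem_sliceIdeal]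
  exact ⟨fun h l hl i => h i l hl, fun h i l hl => h l hl i⟩

end CoeffMap

section Rename

variable {σ τ : Type*}

theorem map_rename_inl_eq_comap (I : Ideal (MvPolynomial σ K)) :
    I.map (rename (Sum.inl : σ → σ ⊕ τ))
      = (I.map (map (algebraMap K (MvPolynomial τ K)))).comap (sumAlgEquiv K σ τ) :=
  Ideal.map_eq_comap_of_comp_eq _ (sumAlgEquiv K σ τ).toRingEquiv
    (by apply MvPolynomial.ringHom_ext <;> intro x <;> simp) I

theorem map_rename_inr_eq_comap (J : Ideal (MvPolynomial τ K)) :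
    J.map (rename (Sum.inr : τ → σ ⊕ τ))
      = (J.map (C : MvPolynomial τ K →+* _)).comap (sumAlgEquiv K σ τ) :=
  Ideal.map_eq_comap_of_comp_eq _ (sumAlgEquiv K σ τ).toRingEquiv
    (by apply MvPolynomial.ringHom_ext <;> intro x <;> simp) J

theorem iInf_map_rename_inl_sup {ι : Sort*} (I : ι → Ideal (MvPolynomial σ K))
    (J : Ideal (MvPolynomial τ K)) :
    ⨅ i, (I i).map (rename (Sum.inl : σ → σ ⊕ τ)) ⊔ J.map (rename Sum.inr)
      = (⨅ i, I i).map (rename (Sum.inl : σ → σ ⊕ τ)) ⊔ J.map (rename Sum.inr) := by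
  simp only [map_rename_inl_eq_comap, map_rename_inr_eq_comap,
    ← Ideal.comap_sup_of_surjective _ (sumAlgEquiv K σ τ).surjective, ← Ideal.comap_iInf,
    iInf_map_sup_map_C]

theorem comap_renameEquiv_sumComm (I : Ideal (MvPolynomial σ K)) (J : Ideal (MvPolynomial τ K)) :
    (J.map (rename Sum.inl) ⊔ I.map (rename Sum.inr)).comap (renameEquiv K (Equiv.sumComm σ τ))
      = I.map (rename (Sum.inl : σ → σ ⊕ τ)) ⊔ J.map (rename Sum.inr) := by
  rw [Ideal.comap_sup_of_surjective _ (renameEquiv K (Equiv.sumComm σ τ)).surjective, sup_comm]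
  congr 1 <;>
    refine (Ideal.map_eq_comap_of_comp_eq _ (renameEquiv K (Equiv.sumComm σ τ)).toRingEquiv
      (by apply MvPolynomial.ringHom_ext <;> intro x <;> simp) _).symm

theorem iInf_sup_map_rename_inr {ι : Sort*} (I : Ideal (MvPolynomial σ K))
    (J : ι → Ideal (MvPolynomial τ K)) :
    ⨅ j, I.map (rename (Sum.inl : σ → σ ⊕ τ)) ⊔ (J j).map (rename Sum.inr)
      = I.map (rename (Sum.inl : σ → σ ⊕ τ)) ⊔ (⨅ j, J j).map (rename Sum.inr) := by
  rw [← comap_renameEquiv_sumComm, ← iInf_map_rename_inl_sup, Ideal.comap_iInf]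
  simp only [comap_renameEquiv_sumComm]

theorem iInf_iInf_map_rename_sup {ι κ : Sort*} (I : ι → Ideal (MvPolynomial σ K))
    (J : κ → Ideal (MvPolynomial τ K)) :
    ⨅ i, ⨅ j, (I i).map (rename (Sum.inl : σ → σ ⊕ τ)) ⊔ (J j).map (rename Sum.inr)
      = (⨅ i, I i).map (rename (Sum.inl : σ → σ ⊕ τ)) ⊔ (⨅ j, J j).map (rename Sum.inr) := by
  simp only [iInf_sup_map_rename_inr, iInf_map_rename_inl_sup]

end Rename

theorem ker_aeval_sumElim_X {R ι τ : Type*} [CommRing R] (p : ι → MvPolynomial τ R) :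
    RingHom.ker (aeval (Sum.elim p X) : MvPolynomial (ι ⊕ τ) R →ₐ[R] MvPolynomial τ R)
      = Ideal.span (Set.range fun i => X (Sum.inl i) - rename Sum.inr (p i)) := by
  set S := Ideal.span (Set.range fun i => X (Sum.inl i) - rename (R := R) Sum.inr (p i))
  refine le_antisymm (fun f hf => ?_) (Ideal.span_le.mpr ?_)
  · have hmod : (Ideal.Quotient.mkₐ R S).comp ((rename Sum.inr).comp (aeval (Sum.elim p X)))
        = Ideal.Quotient.mkₐ R S := by
      ext (i | w)
      · rw [AlgHom.comp_apply, AlgHom.comp_apply, aeval_X, Sum.elim_inl,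
          Ideal.Quotient.mkₐ_eq_mk, Ideal.Quotient.eq, ← neg_mem_iff, neg_sub]
        exact Ideal.subset_span ⟨i, rfl⟩
      · simp
    rw [← Ideal.Quotient.eq_zero_iff_mem, ← Ideal.Quotient.mkₐ_eq_mk R, ← hmod,
      AlgHom.comp_apply, AlgHom.comp_apply, RingHom.mem_ker.mp hf, map_zero, map_zero]
  · rintro _ ⟨i, rfl⟩
    rw [SetLike.mem_coe, RingHom.mem_ker, map_sub, aeval_X, aeval_rename, Sum.elim_inl,
      Sum.elim_comp_inr, aeval_X_left_apply, sub_self]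

end MvPolynomial

theorem hadamardProduct_eq_comap (N : ℕ) (I J : Ideal (MvPolynomial (Fin (N+1)) K)) :
    hadamardProduct N I J = (I.map (rename Sum.inl) ⊔ J.map (rename Sum.inr)).comap
      (aeval fun i => X (Sum.inl i) * X (Sum.inr i) :
        MvPolynomial (Fin (N+1)) K →ₐ[K] MvPolynomial (Fin (N+1) ⊕ Fin (N+1)) K) := by
  set φ : MvPolynomial (Fin (N+1) ⊕ (Fin (N+1) ⊕ Fin (N+1))) K →ₐ[K]
      MvPolynomial (Fin (N+1) ⊕ Fin (N+1)) K :=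
    aeval (Sum.elim (fun i => X (Sum.inl i) * X (Sum.inr i)) X)
  have hsection : Function.RightInverse (rename Sum.inr) φ := fun p => by
    simp only [φ, aeval_rename, Sum.elim_comp_inr, aeval_X_left_apply]
  have hcomp : φ.comp (rename Sum.inl) = aeval fun i => X (Sum.inl i) * X (Sum.inr i) := by
    ext i; simp [φ]
  have hspan : {f | ∃ i : Fin (N+1),
        f = X (Sum.inl i) - X (Sum.inr (Sum.inl i)) * X (Sum.inr (Sum.inr i))}
      = Set.range fun i =>
          X (Sum.inl i) - rename (R := K) Sum.inr (X (Sum.inl i) * X (Sum.inr i)) := by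
    ext; simp [eq_comm]
  rw [hadamardProduct, Submodule.add_eq_sup, Submodule.add_eq_sup, hspan,
    ← MvPolynomial.ker_aeval_sumElim_X, ← hcomp, ← Ideal.comap_comapₐ,
    Ideal.comap_eq_map_sup_ker φ _ hsection, Ideal.map_sup, Ideal.map_mapₐ,
    Ideal.map_mapₐ, rename_comp_rename, rename_comp_rename]
  rfl

theorem hadamardProduct_of_finite_intersections_general {N : ℕ} {s t : ℕ}
    (I : Fin s → Ideal (MvPolynomial (Fin (N+1)) K))
    (J : Fin t → Ideal (MvPolynomial (Fin (N+1)) K)) :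
    hadamardProduct N (⨅ i, I i) (⨅ j, J j)
      = ⨅ i, ⨅ j, hadamardProduct N (I i) (J j) := by
  simp only [hadamardProduct_eq_comap, ← Ideal.comap_iInf, MvPolynomial.iInf_iInf_map_rename_sup]

/-- If `I = I_1 ∩ … ∩ I_s` and `J = J_1 ∩ … ∩ J_t` (e.g. primary decompositions), then
`I ⋆ J = ⋂_{i,j} (I_i ⋆ J_j)`. -/
theorem hadamardProduct_of_finite_intersections [IsAlgClosed K] {N : ℕ} {s t : ℕ}
    (I : Fin s → Ideal (MvPolynomial (Fin (N+1)) K))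
    (J : Fin t → Ideal (MvPolynomial (Fin (N+1)) K)) :
    hadamardProduct N (⨅ i, I i) (⨅ j, J j)
      = ⨅ i, ⨅ j, hadamardProduct N (I i) (J j) :=
  hadamardProduct_of_finite_intersections_general I J
end
end

section
/- Let t ≥ 1 be an integer. If P = [0:p_1:p_2] ∈ P^2 with p_1 p_2 ≠ 0, then I(P) ⋆ 𝔪^t = ⟨x_0⟩ + ⟨x_1, x_2⟩^t. If P = [0:0:1], then I(P) ⋆ 𝔪^t = ⟨x_0, x_1⟩ + ⟨x_2^t⟩. -/
open MvPolynomial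

noncomputable section

variable {K : Type*} [Field K]

/-- The Hadamard product of two ideals `I, J ⊆ K[x_0,x_1,x_2]`: introduce new variables
`y_0,y_1,y_2` and `z_0,z_1,z_2` (encoded via a sum type), map `I` via `x_i ↦ y_i`, `J` via
`x_i ↦ z_i`, add the relations `x_i − y_i z_i`, and eliminate `y, z` (i.e. take the
preimage in `K[x_0,x_1,x_2]`). -/
def hadamard (I J : Ideal (MvPolynomial (Fin 3) K)) : Ideal (MvPolynomial (Fin 3) K) :=
  Ideal.comap
    (rename (Sum.inl : Fin 3 → Fin 3 ⊕ (Fin 3 ⊕ Fin 3)))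
    (Ideal.map (rename (fun i : Fin 3 => (Sum.inr (Sum.inl i) : Fin 3 ⊕ (Fin 3 ⊕ Fin 3)))) I
      + Ideal.map (rename (fun i : Fin 3 => (Sum.inr (Sum.inr i) : Fin 3 ⊕ (Fin 3 ⊕ Fin 3)))) J
      + Ideal.span { f | ∃ i : Fin 3,
          f = X (Sum.inl i) - X (Sum.inr (Sum.inl i)) * X (Sum.inr (Sum.inr i)) })

/-- The homogeneous vanishing ideal of the point `P = [p_0:p_1:p_2] ∈ ℙ²`, generated by
the forms `p_j x_i − p_i x_j`. -/
def pointIdeal (p : Fin 3 → K) : Ideal (MvPolynomial (Fin 3) K) :=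
  Ideal.span { f | ∃ i j : Fin 3, f = C (p j) * X i - C (p i) * X j }

/-- The irrelevant ideal `𝔪 = ⟨x_0,x_1,x_2⟩` of `K[x_0,x_1,x_2]`. -/
def irrelevantIdeal (K : Type*) [Field K] : Ideal (MvPolynomial (Fin 3) K) :=
  Ideal.span (Set.range X)

/-!
Modulo the relations `x_i - y_i z_i` every polynomial is congruent to one in `y, z` alone, so
`I ⋆ J` is the preimage of `I(y) + J(z)` under the substitution `x_i ↦ y_i z_i`.
For `I = I(P)` and `J = 𝔪^t`, the substitution `y ↦ P`, `z_i ↦ x_i / p_i` (and `z_i ↦ 0` when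
`p_i = 0`) kills `I(P)(y)`, maps `𝔪(z)` into `⟨x_i : p_i ≠ 0⟩`, and composed with
`x_i ↦ y_i z_i` it kills exactly the variables with `p_i = 0`. Hence, for every point `P`,
`I(P) ⋆ 𝔪^t = ⟨x_i : p_i = 0⟩ + ⟨x_i : p_i ≠ 0⟩^t`.
-/

theorem Ideal.eq_comap_of_sub_mem {R S F G : Type*} [CommRing R] [CommRing S]
    [FunLike F R S] [RingHomClass F R S] [FunLike G S R] [RingHomClass G S R] (π : F) (ι : G)
    {M : Ideal R} {N : Ideal S} (hπ : M ≤ N.comap π) (hι : N ≤ M.comap ι)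
    (h : ∀ g, g - ι (π g) ∈ M) : M = N.comap π :=
  le_antisymm hπ fun g hg => by simpa using M.add_mem (h g) (hι hg)

theorem MvPolynomial.sub_aeval_mem {σ : Type*} {v : σ → MvPolynomial σ K}
    {M : Ideal (MvPolynomial σ K)} (hv : ∀ i, X i - v i ∈ M) (g : MvPolynomial σ K) :
    g - aeval v g ∈ M := by
  have : (Ideal.Quotient.mkₐ K M).comp (aeval v) = Ideal.Quotient.mkₐ K M :=
    algHom_ext fun i => by simpa [Ideal.Quotient.eq] using M.neg_mem_iff.mpr (hv i)
  rw [← Ideal.Quotient.eq, ← Ideal.Quotient.mkₐ_eq_mk K, ← AlgHom.comp_apply, this]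

variable (K) in
def hadamardSubst (σ : Type*) : MvPolynomial σ K →ₐ[K] MvPolynomial (σ ⊕ σ) K :=
  aeval fun i => X (Sum.inl i) * X (Sum.inr i)

@[simp]
theorem hadamardSubst_X {σ : Type*} (i : σ) :
    hadamardSubst K σ (X i) = X (Sum.inl i) * X (Sum.inr i) :=
  aeval_X _ _

theorem hadamard_eq_comap (I J : Ideal (MvPolynomial (Fin 3) K)) :
    hadamard I J = (I.map (rename Sum.inl) ⊔ J.map (rename Sum.inr)).comap
      (hadamardSubst K (Fin 3)) := by
  let π : MvPolynomial (Fin 3 ⊕ (Fin 3 ⊕ Fin 3)) K →ₐ[K] MvPolynomial (Fin 3 ⊕ Fin 3) K :=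
    aeval (Sum.elim (fun i => X (Sum.inl i) * X (Sum.inr i)) X)
  have hπx : π.comp (rename Sum.inl) = hadamardSubst K (Fin 3) :=
    algHom_ext fun i => by simp [π]
  have hπy : π.comp (rename (Sum.inr ∘ Sum.inl)) = rename Sum.inl :=
    algHom_ext fun i => by simp [π]
  have hπz : π.comp (rename (Sum.inr ∘ Sum.inr)) = rename Sum.inr :=
    algHom_ext fun i => by simp [π]
  rw [hadamard]
  refine (congrArg (Ideal.comap _) (Ideal.eq_comap_of_sub_mem π (rename Sum.inr)
    (N := I.map (rename Sum.inl) ⊔ J.map (rename Sum.inr)) ?_ ?_ ?_)).trans ?_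
  · simp only [Ideal.add_eq_sup, sup_le_iff, ← Ideal.map_le_iff_le_comap]
    refine ⟨⟨?_, ?_⟩, ?_⟩
    · exact (Ideal.map_mapₐ _ _).trans_le (by rw [← Function.comp_def, hπy]; exact le_sup_left)
    · exact (Ideal.map_mapₐ _ _).trans_le (by rw [← Function.comp_def, hπz]; exact le_sup_right)
    · rw [Ideal.map_span, Ideal.span_le]
      rintro _ ⟨_, ⟨i, rfl⟩, rfl⟩
      simp [π]
  · rw [← Ideal.map_le_iff_le_comap, Ideal.map_sup, Ideal.map_mapₐ, Ideal.map_mapₐ,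
      rename_comp_rename, rename_comp_rename, Ideal.add_eq_sup, Ideal.add_eq_sup]
    exact sup_le (le_sup_left.trans le_sup_left) (le_sup_right.trans le_sup_left)
  · intro g
    rw [← AlgHom.comp_apply, comp_aeval]
    refine sub_aeval_mem (fun a => ?_) g
    rcases a with i | w
    · exact Ideal.mem_sup_right (Ideal.subset_span ⟨i, by simp⟩)
    · simp
  · ext f
    simp only [Ideal.mem_comap, ← hπx, AlgHom.comp_apply]

theorem X_mem_pointIdeal {p : Fin 3 → K} (hp : p ≠ 0) {i : Fin 3} (hi : p i = 0) :
    X i ∈ pointIdeal p := by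
  obtain ⟨j, hj⟩ := Function.ne_iff.mp hp
  have : C (p j) * X i - C (p i) * X j ∈ pointIdeal p := Ideal.subset_span ⟨i, j, rfl⟩
  simpa [hi, ← mul_assoc, ← C_mul, inv_mul_cancel₀ hj] using
    (pointIdeal p).mul_mem_left (C (p j)⁻¹) this

theorem pointIdeal_le_ker_eval (p : Fin 3 → K) : pointIdeal p ≤ RingHom.ker (eval p) := by
  rw [pointIdeal, Ideal.span_le]
  rintro _ ⟨i, j, rfl⟩
  simp [mul_comm]

theorem hadamard_pointIdeal_irrelevant_pow_le (p : Fin 3 → K) (t : ℕ) :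
    hadamard (pointIdeal p) (irrelevantIdeal K ^ t)
      ≤ Ideal.span (X '' {i | p i = 0}) + Ideal.span (X '' {i | p i ≠ 0}) ^ t := by
  rw [hadamard_eq_comap]
  intro f hf
  -- `(p i)⁻¹ = 0` when `p i = 0`, so this sends `z_i` to `x_i / p_i`, or to `0`.
  let ρ : MvPolynomial (Fin 3 ⊕ Fin 3) K →ₐ[K] MvPolynomial (Fin 3) K :=
    aeval (Sum.elim (fun i => C (p i)) (fun i => C (p i)⁻¹ * X i))
  have hρ : (pointIdeal p).map (rename Sum.inl) ⊔ (irrelevantIdeal K ^ t).map (rename Sum.inr)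
      ≤ (Ideal.span (X '' {i | p i ≠ 0}) ^ t).comap ρ := by
    rw [← Ideal.map_le_iff_le_comap, Ideal.map_sup, Ideal.map_mapₐ, Ideal.map_mapₐ,
      Ideal.map_pow]
    refine sup_le ?_ ?_
    · rw [Ideal.map_le_iff_le_comap]
      intro g hg
      have hρy : ρ.comp (rename Sum.inl) = (Algebra.ofId K _).comp (aeval p) :=
        algHom_ext fun i => by simp [ρ]
      rw [Ideal.mem_comap, hρy, AlgHom.comp_apply,
        show aeval p g = 0 from pointIdeal_le_ker_eval p hg, map_zero]
      exact zero_mem _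
    · refine Ideal.pow_right_mono ?_ t
      rw [irrelevantIdeal, Ideal.map_span, Ideal.span_le]
      rintro _ ⟨_, ⟨i, rfl⟩, rfl⟩
      by_cases hi : p i = 0
      · simp [ρ, hi]
      · simpa [ρ] using Ideal.mul_mem_left _ _ (Ideal.subset_span (Set.mem_image_of_mem X hi))
  have hρψ : f - ρ (hadamardSubst K (Fin 3) f) ∈ Ideal.span (X '' {i | p i = 0}) := by
    rw [hadamardSubst, ← AlgHom.comp_apply, comp_aeval]
    refine sub_aeval_mem (fun i => ?_) f
    by_cases hi : p i = 0
    · have hρi : ρ (X (Sum.inl i) * X (Sum.inr i)) = 0 := by simp [ρ, hi]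
      rw [hρi, sub_zero]
      exact Ideal.subset_span ⟨i, hi, rfl⟩
    · simp [ρ, ← mul_assoc, ← C_mul, mul_inv_cancel₀ hi]
  simpa using Submodule.add_mem_sup hρψ (hρ hf)

theorem le_hadamard_pointIdeal_irrelevant_pow {p : Fin 3 → K} (hp : p ≠ 0) (t : ℕ) :
    Ideal.span (X '' {i | p i = 0}) + Ideal.span (X '' {i | p i ≠ 0}) ^ t
      ≤ hadamard (pointIdeal p) (irrelevantIdeal K ^ t) := by
  rw [hadamard_eq_comap, Ideal.add_eq_sup, sup_le_iff, ← Ideal.map_le_iff_le_comap,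
    ← Ideal.map_le_iff_le_comap, Ideal.map_span, Ideal.map_pow, Ideal.map_pow, Ideal.map_span]
  constructor
  · rw [Ideal.span_le]
    rintro _ ⟨_, ⟨i, hi, rfl⟩, rfl⟩
    rw [hadamardSubst_X, ← rename_X Sum.inl]
    exact Ideal.mem_sup_left
      (Ideal.mul_mem_right _ _ (Ideal.mem_map_of_mem _ (X_mem_pointIdeal hp hi)))
  · refine le_sup_of_le_right (Ideal.pow_right_mono ?_ t)
    rw [Ideal.span_le]
    rintro _ ⟨_, ⟨i, -, rfl⟩, rfl⟩
    rw [hadamardSubst_X, ← rename_X Sum.inr]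
    exact Ideal.mul_mem_left _ _
      (Ideal.mem_map_of_mem _ (Ideal.subset_span ⟨i, rfl⟩ : X i ∈ irrelevantIdeal K))

theorem hadamard_pointIdeal_irrelevant_pow {p : Fin 3 → K} (hp : p ≠ 0) (t : ℕ) :
    hadamard (pointIdeal p) (irrelevantIdeal K ^ t)
      = Ideal.span (X '' {i | p i = 0}) + Ideal.span (X '' {i | p i ≠ 0}) ^ t :=
  (hadamard_pointIdeal_irrelevant_pow_le p t).antisymm
    (le_hadamard_pointIdeal_irrelevant_pow hp t)

theorem hadamard_pointIdeal_irrelevant_pow_of_zero_coords_general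
    (p₁ p₂ : K) (hp : p₁ * p₂ ≠ 0) (t : ℕ) :
    hadamard (pointIdeal ![0, p₁, p₂]) ((irrelevantIdeal K) ^ t)
        = Ideal.span {(X 0 : MvPolynomial (Fin 3) K)}
            + (Ideal.span {(X 1 : MvPolynomial (Fin 3) K), X 2}) ^ t ∧
    hadamard (pointIdeal ![(0 : K), 0, 1]) ((irrelevantIdeal K) ^ t)
        = Ideal.span {(X 0 : MvPolynomial (Fin 3) K), X 1}
            + Ideal.span {(X 2 : MvPolynomial (Fin 3) K) ^ t} := by
  obtain ⟨hp₁, hp₂⟩ := mul_ne_zero_iff.mp hp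
  constructor
  · have hZ : {i | ![0, p₁, p₂] i = 0} = {0} := by
      ext i; fin_cases i <;> simp [hp₁, hp₂]
    have hN : {i | ![0, p₁, p₂] i ≠ 0} = {1, 2} := by
      ext i; fin_cases i <;> simp [hp₁, hp₂]
    rw [hadamard_pointIdeal_irrelevant_pow (fun h => hp₁ (congrFun h 1)), hZ, hN,
      Set.image_singleton, Set.image_pair]
  · have hZ : {i | ![(0 : K), 0, 1] i = 0} = {0, 1} := by
      ext i; fin_cases i <;> simp
    have hN : {i | ![(0 : K), 0, 1] i ≠ 0} = {2} := by
      ext i; fin_cases i <;> simp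
    rw [hadamard_pointIdeal_irrelevant_pow (fun h => one_ne_zero (congrFun h 2)), hZ, hN,
      Set.image_pair, Set.image_singleton, Ideal.span_singleton_pow]

/-- Let `t ≥ 1`. If `P = [0:p_1:p_2]` with `p_1 p_2 ≠ 0`, then
`I(P) ⋆ 𝔪^t = ⟨x_0⟩ + ⟨x_1,x_2⟩^t`; and if `P = [0:0:1]`, then
`I(P) ⋆ 𝔪^t = ⟨x_0,x_1⟩ + ⟨x_2^t⟩`. -/
theorem hadamard_pointIdeal_irrelevant_pow_of_zero_coords [IsAlgClosed K]
    (p₁ p₂ : K) (hp : p₁ * p₂ ≠ 0) (t : ℕ) (ht : 1 ≤ t) :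
    hadamard (pointIdeal ![0, p₁, p₂]) ((irrelevantIdeal K) ^ t)
        = Ideal.span {(X 0 : MvPolynomial (Fin 3) K)}
            + (Ideal.span {(X 1 : MvPolynomial (Fin 3) K), X 2}) ^ t ∧
    hadamard (pointIdeal ![(0 : K), 0, 1]) ((irrelevantIdeal K) ^ t)
        = Ideal.span {(X 0 : MvPolynomial (Fin 3) K), X 1}
            + Ideal.span {(X 2 : MvPolynomial (Fin 3) K) ^ t} :=
  hadamard_pointIdeal_irrelevant_pow_of_zero_coords_general p₁ p₂ hp t
end
end

section
/- Let P ∈ P^2 be a point with all coordinates nonzero (P ∈ P^2 \ Δ_1) and let Q ∈ P^2 be any point (so that P ⋆ Q is defined). Then for every integer n ≥ 1, I(P) ⋆ I(Q)^n = I(P ⋆ Q)^n. -/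
/-!
A point `(b, c)` of `V(I) × V(J)` with coordinates in any `K`-algebra yields the point
`b ⋆ c` of `V(I ⋆ J)`. Taking `b = P` and for `c` the generic point of `V(J)` (the residues
of the `x_i` in `K[x] / J`) gives `I(P) ⋆ J ⊆ {f | f(P ⋆ x) ∈ J}`; when `P ∉ Δ₁` this is the
image of `J` under the rescaling `x_i ↦ x_i / p_i`, which sends `I(Q)` into `I(P ⋆ Q)`.
Conversely, each linear generator of `I(P ⋆ Q)` lies in `I(P) ⋆ I(Q)` by an explicit
identity, and `(I ⋆ J)^n ⊆ I ⋆ J^n` because `I ⋆ J` is the contraction of an ideal of the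
form `J(z) + L`.
-/
open MvPolynomial

noncomputable section

variable {K : Type*} [Field K]

namespace MvPolynomial

variable {σ R : Type*} [CommSemiring R]

def diagScale (c : σ → R) : MvPolynomial σ R →ₐ[R] MvPolynomial σ R :=
  aeval fun i => C (c i) * X i

@[simp]
lemma diagScale_X (c : σ → R) (i : σ) : diagScale c (X i) = C (c i) * X i :=
  aeval_X _ _

lemma diagScale_comp_diagScale (c d : σ → R) :
    (diagScale c).comp (diagScale d) = diagScale (c * d) := by
  apply algHom_ext
  intro i
  simp only [AlgHom.comp_apply, diagScale_X, map_mul, algHom_C, algebraMap_eq, Pi.mul_apply]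
  ring

lemma diagScale_one : diagScale (1 : σ → R) = AlgHom.id R (MvPolynomial σ R) := by
  apply algHom_ext
  intro i
  simp

lemma leftInverse_diagScale_inv {c : σ → K} (hc : ∀ i, c i ≠ 0) :
    Function.LeftInverse (diagScale c⁻¹) (diagScale c) := fun f => by
  have hc1 : c⁻¹ * c = 1 := by ext i; simp [hc i]
  rw [← AlgHom.comp_apply, diagScale_comp_diagScale, hc1, diagScale_one, AlgHom.id_apply]

end MvPolynomial

lemma Ideal.sup_pow_le_pow_sup {R : Type*} [CommSemiring R] (I J : Ideal R) (n : ℕ) :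
    (I ⊔ J) ^ n ≤ I ^ n ⊔ J := by
  induction n with
  | zero => simp
  | succ m ih =>
    calc (I ⊔ J) ^ (m + 1) = (I ⊔ J) ^ m * (I ⊔ J) := pow_succ _ _
      _ ≤ (I ^ m ⊔ J) * (I ⊔ J) := Ideal.mul_mono_left ih
      _ = I ^ (m + 1) ⊔ (I ^ m * J ⊔ (J * I ⊔ J * J)) := by
        rw [Ideal.sup_mul, Ideal.mul_sup, Ideal.mul_sup, ← pow_succ, sup_assoc]
      _ ≤ I ^ (m + 1) ⊔ J :=
        sup_le_sup_left (sup_le Ideal.mul_le_right (sup_le Ideal.mul_le_left Ideal.mul_le_left)) _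

lemma C_mul_X_sub_C_mul_X_mem_pointIdeal (p : Fin 3 → K) (i j : Fin 3) :
    C (p j) * X i - C (p i) * X j ∈ pointIdeal p :=
  Ideal.subset_span ⟨i, j, rfl⟩

lemma pointIdeal_le_ker_aeval {A : Type*} [CommRing A] [Algebra K A] (p : Fin 3 → K) :
    pointIdeal p ≤ RingHom.ker (aeval fun i => algebraMap K A (p i)) := by
  rw [pointIdeal, Ideal.span_le]
  rintro _ ⟨i, j, rfl⟩
  simp [mul_comm]

lemma map_diagScale_pointIdeal_le (c r : Fin 3 → K) :
    (pointIdeal (c * r)).map (diagScale c) ≤ pointIdeal r := by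
  rw [Ideal.map_le_iff_le_comap, pointIdeal, Ideal.span_le]
  rintro _ ⟨i, j, rfl⟩
  have hscale : diagScale c (C ((c * r) j) * X i - C ((c * r) i) * X j) =
      C (c i * c j) * (C (r j) * X i - C (r i) * X j) := by
    simp only [map_sub, map_mul, diagScale_X, Pi.mul_apply, algHom_C, algebraMap_eq]
    ring
  rw [SetLike.mem_coe, Ideal.mem_comap, hscale]
  exact Ideal.mul_mem_left _ _ (C_mul_X_sub_C_mul_X_mem_pointIdeal r i j)

lemma hadamard_le_ker_aeval {A : Type*} [CommRing A] [Algebra K A]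
    {I J : Ideal (MvPolynomial (Fin 3) K)} (b c : Fin 3 → A)
    (hI : I ≤ RingHom.ker (aeval b)) (hJ : J ≤ RingHom.ker (aeval c)) :
    hadamard I J ≤ RingHom.ker (aeval (b * c)) := by
  let Φ := aeval (R := K) (Sum.elim (b * c) (Sum.elim b c) : Fin 3 ⊕ (Fin 3 ⊕ Fin 3) → A)
  intro f hf
  rw [hadamard, Ideal.mem_comap] at hf
  suffices h : _ ≤ RingHom.ker Φ by
    simpa [Φ, aeval_rename] using h hf
  refine sup_le (sup_le ?_ ?_) ?_
  · rw [Ideal.map_le_iff_le_comap]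
    intro g hg
    simpa [Φ, aeval_rename, Function.comp_def] using hI hg
  · rw [Ideal.map_le_iff_le_comap]
    intro g hg
    simpa [Φ, aeval_rename, Function.comp_def] using hJ hg
  · rw [Ideal.span_le]
    rintro _ ⟨i, rfl⟩
    simp [Φ]

lemma hadamard_pointIdeal_le_comap_diagScale (p : Fin 3 → K)
    (J : Ideal (MvPolynomial (Fin 3) K)) :
    hadamard (pointIdeal p) J ≤ J.comap (diagScale p) := by
  let mk := Ideal.Quotient.mkₐ K J
  have hmk : aeval (fun i => mk (X i)) = mk := (aeval_unique mk).symm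
  have hcomp :
      aeval ((fun i => algebraMap K _ (p i)) * fun i => mk (X i)) = mk.comp (diagScale p) := by
    apply algHom_ext
    intro i
    simp [mk]
    rfl
  have key := hadamard_le_ker_aeval (J := J) (fun i => algebraMap K _ (p i))
    (fun i => mk (X i)) (pointIdeal_le_ker_aeval p)
    (by rw [hmk]; exact fun f hf => Ideal.Quotient.eq_zero_iff_mem.2 hf)
  rw [hcomp] at key
  intro f hf
  simpa [mk, Ideal.Quotient.eq_zero_iff_mem] using key hf

lemma pointIdeal_mul_le_hadamard (p q : Fin 3 → K) :
    pointIdeal (p * q) ≤ hadamard (pointIdeal p) (pointIdeal q) := by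
  rw [pointIdeal, Ideal.span_le]
  rintro _ ⟨i, j, rfl⟩
  rw [SetLike.mem_coe, hadamard, Ideal.mem_comap]
  let x k : MvPolynomial (Fin 3 ⊕ (Fin 3 ⊕ Fin 3)) K := X (Sum.inl k)
  let y k : MvPolynomial (Fin 3 ⊕ (Fin 3 ⊕ Fin 3)) K := X (Sum.inr (Sum.inl k))
  let z k : MvPolynomial (Fin 3 ⊕ (Fin 3 ⊕ Fin 3)) K := X (Sum.inr (Sum.inr k))
  have hy : C (p j) * y i - C (p i) * y j ∈
      (pointIdeal p).map (rename fun k => (Sum.inr (Sum.inl k) : Fin 3 ⊕ (Fin 3 ⊕ Fin 3))) := by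
    simpa [y] using Ideal.mem_map_of_mem
      (rename fun k => (Sum.inr (Sum.inl k) : Fin 3 ⊕ (Fin 3 ⊕ Fin 3)))
      (C_mul_X_sub_C_mul_X_mem_pointIdeal p i j)
  have hz : C (q j) * z i - C (q i) * z j ∈
      (pointIdeal q).map (rename fun k => (Sum.inr (Sum.inr k) : Fin 3 ⊕ (Fin 3 ⊕ Fin 3))) := by
    simpa [z] using Ideal.mem_map_of_mem
      (rename fun k => (Sum.inr (Sum.inr k) : Fin 3 ⊕ (Fin 3 ⊕ Fin 3)))
      (C_mul_X_sub_C_mul_X_mem_pointIdeal q i j)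
  have hs : ∀ k, x k - y k * z k ∈ Ideal.span { f | ∃ i : Fin 3,
      f = X (Sum.inl i) - X (Sum.inr (Sum.inl i)) * X (Sum.inr (Sum.inr i)) } :=
    fun k => Ideal.subset_span ⟨k, rfl⟩
  have hgen : rename Sum.inl (C ((p * q) j) * X i - C ((p * q) i) * X j) =
      C (q j) * z i * (C (p j) * y i - C (p i) * y j)
        + C (p i) * y j * (C (q j) * z i - C (q i) * z j)
        + (C (p j * q j) * (x i - y i * z i) - C (p i * q i) * (x j - y j * z j)) := by
    simp only [map_sub, map_mul, rename_C, rename_X, Pi.mul_apply, x, y, z]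
    ring
  rw [hgen]
  refine Ideal.add_mem _ (Ideal.add_mem _ ?_ ?_) ?_
  · exact Ideal.mem_sup_left (Ideal.mem_sup_left (Ideal.mul_mem_left _ _ hy))
  · exact Ideal.mem_sup_left (Ideal.mem_sup_right (Ideal.mul_mem_left _ _ hz))
  · exact Ideal.mem_sup_right
      (Ideal.sub_mem _ (Ideal.mul_mem_left _ _ (hs i)) (Ideal.mul_mem_left _ _ (hs j)))

lemma hadamard_pow_le (I J : Ideal (MvPolynomial (Fin 3) K)) (n : ℕ) :
    hadamard I J ^ n ≤ hadamard I (J ^ n) := by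
  have hcomm : ∀ a b c : Ideal (MvPolynomial (Fin 3 ⊕ (Fin 3 ⊕ Fin 3)) K),
      a + b + c = b ⊔ (a ⊔ c) := fun a b c => by
    rw [Ideal.add_eq_sup, Ideal.add_eq_sup, sup_right_comm, sup_comm]
  simp only [hadamard, hcomm, Ideal.map_pow]
  exact (Ideal.le_comap_pow _ n).trans (Ideal.comap_mono (Ideal.sup_pow_le_pow_sup _ _ n))

theorem hadamard_pointIdeal_pow_of_general_point_general (p q : Fin 3 → K)
    (hp : ∀ i, p i ≠ 0) (n : ℕ) :
    hadamard (pointIdeal p) (pointIdeal q ^ n) = pointIdeal (fun i => p i * q i) ^ n := by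
  apply le_antisymm
  · have hq : p⁻¹ * (p * q) = q := by ext i; simp [hp i]
    calc hadamard (pointIdeal p) (pointIdeal q ^ n)
        ≤ (pointIdeal q ^ n).comap (diagScale p) := hadamard_pointIdeal_le_comap_diagScale p _
      _ ≤ (pointIdeal q ^ n).map (diagScale p⁻¹) :=
        Ideal.comap_le_map_of_inverse _ _ _ (leftInverse_diagScale_inv hp)
      _ = ((pointIdeal (p⁻¹ * (p * q))).map (diagScale p⁻¹)) ^ n := by rw [Ideal.map_pow, hq]
      _ ≤ pointIdeal (p * q) ^ n := Ideal.pow_right_mono (map_diagScale_pointIdeal_le _ _) n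
  · calc pointIdeal (p * q) ^ n ≤ hadamard (pointIdeal p) (pointIdeal q) ^ n :=
          Ideal.pow_right_mono (pointIdeal_mul_le_hadamard p q) n
      _ ≤ hadamard (pointIdeal p) (pointIdeal q ^ n) := hadamard_pow_le _ _ n

/-- If `P ∈ ℙ² \ Δ₁` (all coordinates nonzero) and `Q ∈ ℙ²` is any point (so that
`P ⋆ Q` is defined), then for every `n ≥ 1`, `I(P) ⋆ I(Q)^n = I(P ⋆ Q)^n`. -/
theorem hadamard_pointIdeal_pow_of_general_point [IsAlgClosed K] (p q : Fin 3 → K)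
    (hp : ∀ i, p i ≠ 0) (hq : q ≠ 0) (n : ℕ) (hn : 1 ≤ n) :
    hadamard (pointIdeal p) (pointIdeal q ^ n) = pointIdeal (fun i => p i * q i) ^ n :=
  hadamard_pointIdeal_pow_of_general_point_general p q hp n
end
end
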